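/- (Corollary 2, part (ii).) Let μ ∈ (0,1). Suppose ‖D‖ ≤ δ for a known δ > 0, and suppose there exist ε₁ ∈ ℝ, ε₂ ∈ ℝ, Y ∈ ℝ^{n×T}, and P = Pᵀ ∈ ℝ^{n×n} such that the block matrix [[−μP, 0, Y U_{0,T}ᵀ, Y X_{1,T}ᵀ, −δ Y V_{0,T}ᵀ], [0, −ε₁P, 0, 0, δε₁P], [U_{0,T} Yᵀ, 0, −ε₁I, 0, 0], [X_{1,T} Yᵀ, 0, 0, −P + ε₂I, 0], [−δ V_{0,T} Yᵀ, δε₁P, 0, 0, −ε₂I]] is negative definite and P = X_{0,T} Yᵀ. Set Q := P⁻¹, K := U_{0,T} Yᵀ (X_{0,T} Yᵀ)⁻¹, and f(x) := A x + B (K x) + D x (K x). Then every solution of x(t+1) = f(x(t)) with x(0) ∈ ℰ_Q := {x : xᵀ Q x ≤ 1} satisfies x(t) ∈ ℰ_Q and x(t)ᵀ Q x(t) ≤ μᵗ · x(0)ᵀ Q x(0) for all t ≥ 0; in particular the origin is exponentially stable for the closed loop and its basin of attraction contains ℰ_Q. -/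

import Mathlib

open Matrix Filter
open scoped Matrix.Norms.L2Operator Topology

/-- The data-based 5×5 block matrix with `(1,1)` block `−μP`, blocks of sizes
`[n, n, 1, n, n]`:
`[[−μP, 0, Y U₀ᵀ, Y X₁ᵀ, −δ Y V₀ᵀ], [0, −ε₁P, 0, 0, δε₁P], [U₀ Yᵀ, 0, −ε₁I, 0, 0],
[X₁ Yᵀ, 0, 0, −P + ε₂I, 0], [−δ V₀ Yᵀ, δε₁P, 0, 0, −ε₂I]]`. -/
def dataBlockMat5Mu {n T : ℕ} (μ : ℝ)
    (P : Matrix (Fin n) (Fin n) ℝ) (Y : Matrix (Fin n) (Fin T) ℝ)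
    (U₀ : Matrix (Fin 1) (Fin T) ℝ) (X₁ V₀ : Matrix (Fin n) (Fin T) ℝ)
    (δ ε₁ ε₂ : ℝ) :
    Matrix (((Fin n ⊕ Fin n) ⊕ (Fin 1 ⊕ Fin n)) ⊕ Fin n)
      (((Fin n ⊕ Fin n) ⊕ (Fin 1 ⊕ Fin n)) ⊕ Fin n) ℝ :=
  Matrix.fromBlocks
    (Matrix.fromBlocks
      (Matrix.fromBlocks (-(μ • P)) 0 0 (-(ε₁ • P)))
      (Matrix.fromBlocks (Y * U₀ᵀ) (Y * X₁ᵀ) 0 0)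
      (Matrix.fromBlocks (U₀ * Yᵀ) 0 (X₁ * Yᵀ) 0)
      (Matrix.fromBlocks (-(ε₁ • (1 : Matrix (Fin 1) (Fin 1) ℝ))) 0 0
        (-P + ε₂ • (1 : Matrix (Fin n) (Fin n) ℝ))))
    (Matrix.fromRows
      (Matrix.fromRows (-(δ • (Y * V₀ᵀ))) ((δ * ε₁) • P))
      (Matrix.fromRows (0 : Matrix (Fin 1) (Fin n) ℝ) (0 : Matrix (Fin n) (Fin n) ℝ)))
    (Matrix.fromCols
      (Matrix.fromCols (-(δ • (V₀ * Yᵀ))) ((δ * ε₁) • P))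
      (Matrix.fromCols (0 : Matrix (Fin n) (Fin 1) ℝ) (0 : Matrix (Fin n) (Fin n) ℝ)))
    (-(ε₂ • (1 : Matrix (Fin n) (Fin n) ℝ)))

/-!
With `Q = P⁻¹` and `K = U₀ Yᵀ Q`, the data identity `X₁ = A X₀ + B U₀ + D V₀` and `X₀ Yᵀ Q = 1`
rewrite the closed loop as `x⁺ = X₁ Yᵀ Q x + D w` with `w = (K x) x - V₀ Yᵀ Q x`. Evaluating the
LMI at a vector built from `Q x`, `Q x⁺` and `w`, and completing squares with `‖D‖ ≤ δ` and the
Cauchy–Schwarz bound `(xᵀ w)² ≤ (xᵀ Q x) (wᵀ P w) ≤ wᵀ P w`, valid inside `ℰ_Q`, gives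
`x⁺ᵀ Q x⁺ ≤ μ xᵀ Q x`. By induction the trajectory stays in `ℰ_Q` and decays geometrically, and
`xᵢ² ≤ Pᵢᵢ xᵀ Q x` turns this decay into convergence to the origin.
-/

namespace Matrix

variable {l m n : Type*} [Fintype m] [Fintype n]

lemma PosSemidef.dotProduct_mulVec_sq_le {M : Matrix m m ℝ} (hM : M.PosSemidef) (u v : m → ℝ) :
    (u ⬝ᵥ M *ᵥ v) ^ 2 ≤ (u ⬝ᵥ M *ᵥ u) * (v ⬝ᵥ M *ᵥ v) := by
  let _ := M.toSeminormedAddCommGroup hM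
  let _ := M.toInnerProductSpace hM
  have h := real_inner_mul_inner_self_le u v
  change (M *ᵥ v) ⬝ᵥ u * ((M *ᵥ v) ⬝ᵥ u) ≤ (M *ᵥ u) ⬝ᵥ u * ((M *ᵥ v) ⬝ᵥ v) at h
  simpa only [dotProduct_comm _ u, dotProduct_comm _ v, sq] using h

lemma mulVec_dotProduct_self_le_of_l2_opNorm_le [DecidableEq n] {D : Matrix m n ℝ} {δ : ℝ}
    (hD : ‖D‖ ≤ δ) (w : n → ℝ) : (D *ᵥ w) ⬝ᵥ (D *ᵥ w) ≤ δ ^ 2 * (w ⬝ᵥ w) := by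
  have key : ‖WithLp.toLp 2 (D *ᵥ w)‖ ≤ δ * ‖WithLp.toLp 2 w‖ :=
    (D.l2_opNorm_mulVec (WithLp.toLp 2 w)).trans (mul_le_mul_of_nonneg_right hD (norm_nonneg _))
  have := pow_le_pow_left₀ (norm_nonneg _) key 2
  rw [mul_pow, EuclideanSpace.real_norm_sq_eq, EuclideanSpace.real_norm_sq_eq] at this
  simpa [dotProduct, sq] using this

lemma PosDef.sq_le_mul_dotProduct_inv_mulVec [DecidableEq m] {P : Matrix m m ℝ} (hP : P.PosDef)
    (v : m → ℝ) (i : m) : v i ^ 2 ≤ P i i * (v ⬝ᵥ P⁻¹ *ᵥ v) := by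
  have hPinv : P⁻¹ * P = 1 := nonsing_inv_mul P ((isUnit_iff_isUnit_det P).mp hP.isUnit)
  have hsymm : (P⁻¹)ᵀ = P⁻¹ := (isHermitian_iff_isSymm.mp hP.inv.isHermitian).eq
  set u := P *ᵥ Pi.single i 1 with hu_def
  have hu : P⁻¹ *ᵥ u = Pi.single i 1 := by rw [hu_def, mulVec_mulVec, hPinv, one_mulVec]
  have huv : u ⬝ᵥ P⁻¹ *ᵥ v = v i := by
    rw [← hsymm, dotProduct_transpose_mulVec, hu, dotProduct_single, mul_one]
  have huu : u ⬝ᵥ P⁻¹ *ᵥ u = P i i := by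
    rw [hu, dotProduct_single, mul_one, hu_def, mulVec_single_one]; rfl
  simpa [huv, huu] using hP.inv.posSemidef.dotProduct_mulVec_sq_le u v

lemma transpose_mul_apply_zero (A : Matrix l m ℝ) (y : Matrix m (Fin 1) ℝ) :
    (A * y)ᵀ 0 = A *ᵥ yᵀ 0 := by
  rw [transpose_mul, mul_apply_eq_vecMul, vecMul_transpose]

lemma transpose_mul_mul_apply_zero_zero (M : Matrix m m ℝ) (y : Matrix m (Fin 1) ℝ) :
    (yᵀ * M * y) 0 0 = yᵀ 0 ⬝ᵥ M *ᵥ yᵀ 0 := by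
  rw [Matrix.mul_assoc, mul_apply', ← transpose_mul_apply_zero]; rfl

end Matrix

section DataLMI

variable {n T : ℕ} {μ δ ε₁ ε₂ : ℝ} {P : Matrix (Fin n) (Fin n) ℝ} {Y : Matrix (Fin n) (Fin T) ℝ}
  {U₀ : Matrix (Fin 1) (Fin T) ℝ} {X₁ V₀ : Matrix (Fin n) (Fin T) ℝ}

def dataBlockVec (a b : Fin n → ℝ) (s : Fin 1 → ℝ) (c d : Fin n → ℝ) :
    ((Fin n ⊕ Fin n) ⊕ (Fin 1 ⊕ Fin n)) ⊕ Fin n → ℝ :=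
  Sum.elim (Sum.elim (Sum.elim a b) (Sum.elim s c)) d

lemma dataBlockVec_eq_zero_iff {a b c d : Fin n → ℝ} {s : Fin 1 → ℝ} :
    dataBlockVec a b s c d = 0 ↔ a = 0 ∧ b = 0 ∧ s = 0 ∧ c = 0 ∧ d = 0 := by
  simp only [dataBlockVec, funext_iff, Sum.forall, Sum.elim_inl, Sum.elim_inr, Pi.zero_apply]
  tauto

lemma dataBlockMat5Mu_quadForm (a b : Fin n → ℝ) (s : Fin 1 → ℝ) (c d : Fin n → ℝ) :
    dataBlockVec a b s c d ⬝ᵥ dataBlockMat5Mu μ P Y U₀ X₁ V₀ δ ε₁ ε₂ *ᵥ dataBlockVec a b s c d =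
      -μ * (a ⬝ᵥ P *ᵥ a) - ε₁ * (b ⬝ᵥ P *ᵥ b) - ε₁ * (s ⬝ᵥ s) - c ⬝ᵥ P *ᵥ c + ε₂ * (c ⬝ᵥ c)
        - ε₂ * (d ⬝ᵥ d) + 2 * (s ⬝ᵥ (U₀ * Yᵀ) *ᵥ a) + 2 * (c ⬝ᵥ (X₁ * Yᵀ) *ᵥ a)
        - 2 * δ * (d ⬝ᵥ (V₀ * Yᵀ) *ᵥ a) + δ * ε₁ * (b ⬝ᵥ P *ᵥ d + d ⬝ᵥ P *ᵥ b) := by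
  have hU : Y * U₀ᵀ = (U₀ * Yᵀ)ᵀ := by rw [transpose_mul, transpose_transpose]
  have hX : Y * X₁ᵀ = (X₁ * Yᵀ)ᵀ := by rw [transpose_mul, transpose_transpose]
  have hV : Y * V₀ᵀ = (V₀ * Yᵀ)ᵀ := by rw [transpose_mul, transpose_transpose]
  simp only [dataBlockVec, dataBlockMat5Mu, fromBlocks_mulVec, fromRows_mulVec,
    fromCols_mulVec_sumElim, sumElim_dotProduct_sumElim, dotProduct_add, neg_mulVec, add_mulVec,
    smul_mulVec, one_mulVec, zero_mulVec, dotProduct_neg, dotProduct_smul, dotProduct_zero,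
    smul_eq_mul, add_zero, zero_add, Sum.elim_comp_inl, Sum.elim_comp_inr, hU, hX, hV,
    dotProduct_transpose_mulVec]
  ring

lemma dataBlockMat5Mu_quadForm_neg (h : (-dataBlockMat5Mu μ P Y U₀ X₁ V₀ δ ε₁ ε₂).PosDef)
    {a b c d : Fin n → ℝ} {s : Fin 1 → ℝ} (hv : dataBlockVec a b s c d ≠ 0) :
    dataBlockVec a b s c d ⬝ᵥ dataBlockMat5Mu μ P Y U₀ X₁ V₀ δ ε₁ ε₂ *ᵥ dataBlockVec a b s c d
      < 0 := by
  simpa [neg_mulVec] using h.dotProduct_mulVec_pos hv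

lemma eps₁_pos_of_posDef_neg_dataBlockMat5Mu
    (h : (-dataBlockMat5Mu μ P Y U₀ X₁ V₀ δ ε₁ ε₂).PosDef) : 0 < ε₁ := by
  have := dataBlockMat5Mu_quadForm_neg h (a := 0) (b := 0) (s := 1) (c := 0) (d := 0)
    (by simp [dataBlockVec_eq_zero_iff])
  simpa [dataBlockMat5Mu_quadForm] using this

lemma eps₂_pos_of_posDef_neg_dataBlockMat5Mu
    (h : (-dataBlockMat5Mu μ P Y U₀ X₁ V₀ δ ε₁ ε₂).PosDef) (hn : 0 < n) : 0 < ε₂ := by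
  have := dataBlockMat5Mu_quadForm_neg h (a := 0) (b := 0) (s := 0) (c := 0)
    (d := Pi.single ⟨0, hn⟩ 1) (by simp [dataBlockVec_eq_zero_iff])
  simpa [dataBlockMat5Mu_quadForm] using this

lemma posDef_of_posDef_neg_dataBlockMat5Mu
    (h : (-dataBlockMat5Mu μ P Y U₀ X₁ V₀ δ ε₁ ε₂).PosDef) (hμ : 0 < μ) (hP : P.IsHermitian) :
    P.PosDef := by
  refine .of_dotProduct_mulVec_pos hP fun a ha => ?_
  have := dataBlockMat5Mu_quadForm_neg h (a := a) (b := 0) (s := 0) (c := 0) (d := 0)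
    (by simp [dataBlockVec_eq_zero_iff, ha])
  simp [dataBlockMat5Mu_quadForm] at this
  simpa using pos_of_mul_pos_right (by linarith : 0 < μ * (a ⬝ᵥ P *ᵥ a)) hμ.le

/-- The one-step decrease in the variables `ξ = P⁻¹ x`, `η = P⁻¹ x⁺`: the LMI is evaluated at
`(ε₁ε₂ ξ, ε₁δ² w, ε₂ k, ε₁ε₂ η, ε₁δ w)`, where it equals `(ε₁ε₂)² (ηᵀPη - μ ξᵀPξ)` plus
the nonnegative terms `ε₁ (ε₂k - ε₁δ² ξᵀPw)²`, `ε₁³δ⁴ (wᵀPw - (ξᵀPw)²)`,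
`ε₁²ε₂ ‖ε₂η - Dw‖²` and `ε₁²ε₂ (δ²‖w‖² - ‖Dw‖²)`. -/
lemma dataBlockMat5Mu_decrease (hM : ∀ v, v ⬝ᵥ dataBlockMat5Mu μ P Y U₀ X₁ V₀ δ ε₁ ε₂ *ᵥ v ≤ 0)
    (hε₁ : 0 < ε₁) (hε₂ : 0 < ε₂) (hP : P.PosSemidef) {D : Matrix (Fin n) (Fin n) ℝ}
    (hD : ‖D‖ ≤ δ) {ξ η w : Fin n → ℝ} {k : ℝ}
    (hU : (U₀ * Yᵀ) *ᵥ ξ = fun _ => k) (hX : (X₁ * Yᵀ) *ᵥ ξ = P *ᵥ η - D *ᵥ w)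
    (hV : (V₀ * Yᵀ) *ᵥ ξ = k • P *ᵥ ξ - w) (hξ : ξ ⬝ᵥ P *ᵥ ξ ≤ 1) :
    η ⬝ᵥ P *ᵥ η ≤ μ * (ξ ⬝ᵥ P *ᵥ ξ) := by
  have hq := hM (dataBlockVec ((ε₁ * ε₂) • ξ) ((ε₁ * δ ^ 2) • w) (fun _ => ε₂ * k)
    ((ε₁ * ε₂) • η) ((ε₁ * δ) • w))
  have hPsymm : Pᵀ = P := (isHermitian_iff_isSymm.mp hP.isHermitian).eq
  have hwξ : w ⬝ᵥ P *ᵥ ξ = ξ ⬝ᵥ P *ᵥ w := by rw [← dotProduct_transpose_mulVec, hPsymm]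
  have hconst (a b : ℝ) : (fun _ : Fin 1 => a) ⬝ᵥ (fun _ => b) = a * b := by simp [dotProduct]
  simp only [dataBlockMat5Mu_quadForm, mulVec_smul, hU, hX, hV, smul_dotProduct, dotProduct_smul,
    dotProduct_sub, smul_eq_mul, hconst, hwξ] at hq
  have hcs : (ξ ⬝ᵥ P *ᵥ w) ^ 2 ≤ w ⬝ᵥ P *ᵥ w :=
    (hP.dotProduct_mulVec_sq_le ξ w).trans
      (mul_le_of_le_one_left (by simpa using hP.dotProduct_mulVec_nonneg w) hξ)
  have hDw := mulVec_dotProduct_self_le_of_l2_opNorm_le hD w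
  have hsq : 0 ≤ ε₂ ^ 2 * (η ⬝ᵥ η) - 2 * ε₂ * (η ⬝ᵥ D *ᵥ w) + (D *ᵥ w) ⬝ᵥ (D *ᵥ w) := by
    have := dotProduct_self_star_nonneg (ε₂ • η - D *ᵥ w)
    simp only [star_trivial, sub_dotProduct, dotProduct_sub, smul_dotProduct, dotProduct_smul,
      smul_eq_mul, dotProduct_comm (D *ᵥ w) η] at this
    linarith
  have hdecr : (ε₁ * ε₂) ^ 2 * (η ⬝ᵥ P *ᵥ η - μ * (ξ ⬝ᵥ P *ᵥ ξ)) ≤ 0 := by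
    linarith [mul_nonneg hε₁.le (sq_nonneg (ε₂ * k - ε₁ * δ ^ 2 * (ξ ⬝ᵥ P *ᵥ w))),
      mul_nonneg (by positivity : 0 ≤ ε₁ ^ 3 * δ ^ 4) (sub_nonneg.mpr hcs),
      mul_nonneg (by positivity : 0 ≤ ε₁ ^ 2 * ε₂) hsq,
      mul_nonneg (by positivity : 0 ≤ ε₁ ^ 2 * ε₂) (sub_nonneg.mpr hDw)]
  linarith [nonpos_of_mul_nonpos_right hdecr (by positivity)]

end DataLMI

section ClosedLoop

variable {n T : ℕ} {A D : Matrix (Fin n) (Fin n) ℝ} {B : Matrix (Fin n) (Fin 1) ℝ}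
  {K : Matrix (Fin 1) (Fin n) ℝ} {P Q : Matrix (Fin n) (Fin n) ℝ} {Y : Matrix (Fin n) (Fin T) ℝ}
  {U₀ : Matrix (Fin 1) (Fin T) ℝ} {X₀ X₁ V₀ : Matrix (Fin n) (Fin T) ℝ} {μ δ ε₁ ε₂ : ℝ}

lemma dataMatrix_succ_eq {u : ℕ → ℝ} {x : ℕ → Matrix (Fin n) (Fin 1) ℝ}
    (hdyn : ∀ t < T, x (t + 1) = A * x t + u t • B + u t • (D * x t)) :
    (of fun i (t : Fin T) => x (t + 1) i 0) =
      A * of (fun i (t : Fin T) => x t i 0) + B * of (fun (_ : Fin 1) (t : Fin T) => u t)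
        + D * of (fun i (t : Fin T) => x t i 0 * u t) := by
  ext i t
  simp [hdyn t t.2, mul_apply, Finset.mul_sum, mul_comm, mul_left_comm]

lemma closedLoop_eq_data (hdata : X₁ = A * X₀ + B * U₀ + D * V₀) (hX₀ : X₀ * Yᵀ * Q = 1)
    (hK : K = U₀ * Yᵀ * Q) (y : Matrix (Fin n) (Fin 1) ℝ) :
    A * y + B * (K * y) + D * y * (K * y) =
      X₁ * Yᵀ * Q * y + D * (y * (K * y) - V₀ * Yᵀ * Q * y) := by
  have hX₁ : X₁ * Yᵀ * Q = A + B * K + D * (V₀ * Yᵀ * Q) := by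
    calc X₁ * Yᵀ * Q = A * (X₀ * Yᵀ * Q) + B * (U₀ * Yᵀ * Q) + D * (V₀ * Yᵀ * Q) := by
          simp only [hdata, Matrix.add_mul, Matrix.mul_assoc]
      _ = A + B * K + D * (V₀ * Yᵀ * Q) := by rw [hX₀, hK, Matrix.mul_one]
  rw [hX₁]
  simp only [Matrix.add_mul, Matrix.mul_sub, Matrix.mul_assoc]
  abel

lemma closedLoop_lyapunov_le (hM : ∀ v, v ⬝ᵥ dataBlockMat5Mu μ P Y U₀ X₁ V₀ δ ε₁ ε₂ *ᵥ v ≤ 0)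
    (hε₁ : 0 < ε₁) (hε₂ : 0 < ε₂) (hP : P.PosDef) (hD : ‖D‖ ≤ δ)
    (hdata : X₁ = A * X₀ + B * U₀ + D * V₀) (hX₀ : X₀ * Yᵀ = P) (hK : K = U₀ * Yᵀ * P⁻¹)
    {y y' : Matrix (Fin n) (Fin 1) ℝ} (hy' : y' = A * y + B * (K * y) + D * y * (K * y))
    (hy : (yᵀ * P⁻¹ * y) 0 0 ≤ 1) :
    (y'ᵀ * P⁻¹ * y') 0 0 ≤ μ * (yᵀ * P⁻¹ * y) 0 0 := by
  have hPQ : P * P⁻¹ = 1 := mul_nonsing_inv P ((isUnit_iff_isUnit_det P).mp hP.isUnit)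
  rw [closedLoop_eq_data hdata (by rw [hX₀, hPQ]) hK] at hy'
  set v := yᵀ 0
  set k := (K * y) 0 0
  set w := k • v - (V₀ * Yᵀ * P⁻¹) *ᵥ v
  have hPinv (u : Fin n → ℝ) : P *ᵥ (P⁻¹ *ᵥ u) = u := by rw [mulVec_mulVec, hPQ, one_mulVec]
  have hquad (u : Fin n → ℝ) : P⁻¹ *ᵥ u ⬝ᵥ P *ᵥ (P⁻¹ *ᵥ u) = u ⬝ᵥ P⁻¹ *ᵥ u := by
    rw [hPinv, dotProduct_comm]
  have hy'v : y'ᵀ 0 = (X₁ * Yᵀ * P⁻¹) *ᵥ v + D *ᵥ w := by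
    have hyk : (y * (K * y))ᵀ 0 = k • v := by ext i; simp [mul_apply, k, v, mul_comm]
    calc y'ᵀ 0 = (X₁ * Yᵀ * P⁻¹ * y)ᵀ 0 + (D * (y * (K * y) - V₀ * Yᵀ * P⁻¹ * y))ᵀ 0 := by
          rw [hy']; rfl
      _ = (X₁ * Yᵀ * P⁻¹) *ᵥ v + D *ᵥ ((y * (K * y))ᵀ 0 - (V₀ * Yᵀ * P⁻¹ * y)ᵀ 0) := by
          rw [transpose_mul_apply_zero, transpose_mul_apply_zero D]; rfl
      _ = _ := by rw [hyk, transpose_mul_apply_zero]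
  have hU : (U₀ * Yᵀ) *ᵥ (P⁻¹ *ᵥ v) = fun _ => k := by
    rw [mulVec_mulVec, ← hK, ← transpose_mul_apply_zero]
    funext j
    rw [Subsingleton.elim j 0]; rfl
  have hX : (X₁ * Yᵀ) *ᵥ (P⁻¹ *ᵥ v) = P *ᵥ (P⁻¹ *ᵥ y'ᵀ 0) - D *ᵥ w := by
    rw [hPinv, hy'v, mulVec_mulVec, add_sub_cancel_right]
  have hV : (V₀ * Yᵀ) *ᵥ (P⁻¹ *ᵥ v) = k • P *ᵥ (P⁻¹ *ᵥ v) - w := by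
    rw [hPinv, mulVec_mulVec, sub_sub_cancel]
  have := dataBlockMat5Mu_decrease hM hε₁ hε₂ hP.posSemidef hD hU hX hV
    (by rwa [hquad, ← transpose_mul_mul_apply_zero_zero])
  rwa [hquad, hquad, ← transpose_mul_mul_apply_zero_zero, ← transpose_mul_mul_apply_zero_zero]
    at this

end ClosedLoop

lemma le_one_and_le_pow_mul_of_step {V : ℕ → ℝ} {μ : ℝ} (hμ₀ : 0 ≤ μ) (hμ₁ : μ ≤ 1)
    (h0 : V 0 ≤ 1) (hstep : ∀ t, V t ≤ 1 → V (t + 1) ≤ μ * V t) (t : ℕ) :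
    V t ≤ 1 ∧ V t ≤ μ ^ t * V 0 := by
  induction t with
  | zero => simpa using h0
  | succ t ih =>
    have h := hstep t ih.1
    constructor
    · exact h.trans ((mul_le_of_le_one_right hμ₀ ih.1).trans hμ₁)
    · calc V (t + 1) ≤ μ * (μ ^ t * V 0) := h.trans (mul_le_mul_of_nonneg_left ih.2 hμ₀)
        _ = μ ^ (t + 1) * V 0 := by ring

lemma tendsto_zero_of_sq_le_mul_pow {u : ℕ → ℝ} {C μ : ℝ} (hμ₀ : 0 ≤ μ) (hμ₁ : μ < 1)
    (h : ∀ t, u t ^ 2 ≤ C * μ ^ t) : Tendsto u atTop (𝓝 0) := by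
  have hlim : Tendsto (fun t => √(C * μ ^ t)) atTop (𝓝 0) := by
    simpa using ((tendsto_pow_atTop_nhds_zero_of_lt_one hμ₀ hμ₁).const_mul C).sqrt
  exact squeeze_zero_norm (fun t => Real.abs_le_sqrt (h t)) hlim

theorem data_based_exponential_stability_general {n T : ℕ} (hn : 0 < n)
    (μ : ℝ) (hμ : μ ∈ Set.Ioo (0 : ℝ) 1)
    (A : Matrix (Fin n) (Fin n) ℝ) (B : Matrix (Fin n) (Fin 1) ℝ)
    (D : Matrix (Fin n) (Fin n) ℝ)
    (δ : ℝ) (hD : ‖D‖ ≤ δ)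
    (u : ℕ → ℝ) (x : ℕ → Matrix (Fin n) (Fin 1) ℝ)
    (hdyn : ∀ t < T, x (t + 1) = A * x t + u t • B + u t • (D * x t))
    (U₀ : Matrix (Fin 1) (Fin T) ℝ)
    (hU₀ : U₀ = Matrix.of fun (_ : Fin 1) (t : Fin T) => u t)
    (X₀ : Matrix (Fin n) (Fin T) ℝ)
    (hX₀ : X₀ = Matrix.of fun (i : Fin n) (t : Fin T) => x t i 0)
    (X₁ : Matrix (Fin n) (Fin T) ℝ)
    (hX₁ : X₁ = Matrix.of fun (i : Fin n) (t : Fin T) => x (t + 1) i 0)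
    (V₀ : Matrix (Fin n) (Fin T) ℝ)
    (hV₀ : V₀ = Matrix.of fun (i : Fin n) (t : Fin T) => x t i 0 * u t)
    (ε₁ ε₂ : ℝ) (Y : Matrix (Fin n) (Fin T) ℝ)
    (P : Matrix (Fin n) (Fin n) ℝ) (hPsym : P = Pᵀ)
    (hblock : (-(dataBlockMat5Mu μ P Y U₀ X₁ V₀ δ ε₁ ε₂)).PosDef)
    (hP : P = X₀ * Yᵀ)
    (Q : Matrix (Fin n) (Fin n) ℝ) (hQ : Q = P⁻¹)
    (K : Matrix (Fin 1) (Fin n) ℝ) (hK : K = U₀ * Yᵀ * (X₀ * Yᵀ)⁻¹)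
    (f : Matrix (Fin n) (Fin 1) ℝ → Matrix (Fin n) (Fin 1) ℝ)
    (hf : ∀ y : Matrix (Fin n) (Fin 1) ℝ, f y = A * y + B * (K * y) + D * y * (K * y))
    (E : Set (Matrix (Fin n) (Fin 1) ℝ))
    (hE : E = {y : Matrix (Fin n) (Fin 1) ℝ | (yᵀ * Q * y) 0 0 ≤ 1}) :
    ∀ z : ℕ → Matrix (Fin n) (Fin 1) ℝ, (∀ t : ℕ, z (t + 1) = f (z t)) →
      z 0 ∈ E →
        (∀ t : ℕ, z t ∈ E) ∧
        (∀ t : ℕ, ((z t)ᵀ * Q * z t) 0 0 ≤ μ ^ t * (((z 0)ᵀ * Q * z 0) 0 0)) ∧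
        Tendsto z atTop (𝓝 0) := by
  intro z hz hz0
  obtain ⟨hμ₀, hμ₁⟩ := hμ
  have hM : ∀ v, v ⬝ᵥ dataBlockMat5Mu μ P Y U₀ X₁ V₀ δ ε₁ ε₂ *ᵥ v ≤ 0 := fun v => by
    simpa [neg_mulVec] using hblock.posSemidef.dotProduct_mulVec_nonneg v
  have hPd : P.PosDef := posDef_of_posDef_neg_dataBlockMat5Mu hblock hμ₀
    (isHermitian_iff_isSymm.mpr hPsym.symm)
  have hdata : X₁ = A * X₀ + B * U₀ + D * V₀ := by
    subst hU₀ hX₀ hX₁ hV₀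
    exact dataMatrix_succ_eq hdyn
  subst hQ hE
  have hstep (t : ℕ) := closedLoop_lyapunov_le hM (eps₁_pos_of_posDef_neg_dataBlockMat5Mu hblock)
    (eps₂_pos_of_posDef_neg_dataBlockMat5Mu hblock hn) hPd hD hdata hP.symm (hP ▸ hK)
    ((hz t).trans (hf _))
  have hdecay := le_one_and_le_pow_mul_of_step hμ₀.le hμ₁.le hz0 hstep
  refine ⟨fun t => (hdecay t).1, fun t => (hdecay t).2, ?_⟩
  refine tendsto_pi_nhds.2 fun i => tendsto_pi_nhds.2 fun j => ?_
  refine tendsto_zero_of_sq_le_mul_pow (C := P i i * ((z 0)ᵀ * P⁻¹ * z 0) 0 0) hμ₀.le hμ₁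
    fun t => ?_
  calc z t i j ^ 2 ≤ P i i * ((z t)ᵀ * P⁻¹ * z t) 0 0 := by
        rw [transpose_mul_mul_apply_zero_zero, Subsingleton.elim j 0]
        exact hPd.sq_le_mul_dotProduct_inv_mulVec ((z t)ᵀ 0) i
    _ ≤ P i i * (μ ^ t * ((z 0)ᵀ * P⁻¹ * z 0) 0 0) :=
        mul_le_mul_of_nonneg_left (hdecay t).2 hPd.diag_pos.le
    _ = _ := by ring

/-- Corollary 2, part (ii): with the `(1,1)` block of the data-based LMI replaced
by `−μP`, every closed-loop solution starting in `ℰ_Q` stays in `ℰ_Q`, satisfies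
the exponential decay bound `x(t)ᵀ Q x(t) ≤ μᵗ x(0)ᵀ Q x(0)`, and converges to
the origin (exponential stability with basin containing `ℰ_Q`). -/
theorem data_based_exponential_stability {n T : ℕ} (hn : 0 < n) (hT : 0 < T)
    (μ : ℝ) (hμ : μ ∈ Set.Ioo (0 : ℝ) 1)
    (A : Matrix (Fin n) (Fin n) ℝ) (B : Matrix (Fin n) (Fin 1) ℝ)
    (D : Matrix (Fin n) (Fin n) ℝ)
    (δ : ℝ) (hδ : 0 < δ) (hD : ‖D‖ ≤ δ)
    (u : ℕ → ℝ) (x : ℕ → Matrix (Fin n) (Fin 1) ℝ)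
    (hdyn : ∀ t < T, x (t + 1) = A * x t + u t • B + u t • (D * x t))
    (U₀ : Matrix (Fin 1) (Fin T) ℝ)
    (hU₀ : U₀ = Matrix.of fun (_ : Fin 1) (t : Fin T) => u t)
    (X₀ : Matrix (Fin n) (Fin T) ℝ)
    (hX₀ : X₀ = Matrix.of fun (i : Fin n) (t : Fin T) => x t i 0)
    (X₁ : Matrix (Fin n) (Fin T) ℝ)
    (hX₁ : X₁ = Matrix.of fun (i : Fin n) (t : Fin T) => x (t + 1) i 0)
    (V₀ : Matrix (Fin n) (Fin T) ℝ)
    (hV₀ : V₀ = Matrix.of fun (i : Fin n) (t : Fin T) => x t i 0 * u t)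
    (ε₁ ε₂ : ℝ) (Y : Matrix (Fin n) (Fin T) ℝ)
    (P : Matrix (Fin n) (Fin n) ℝ) (hPsym : P = Pᵀ)
    (hblock : (-(dataBlockMat5Mu μ P Y U₀ X₁ V₀ δ ε₁ ε₂)).PosDef)
    (hP : P = X₀ * Yᵀ)
    (Q : Matrix (Fin n) (Fin n) ℝ) (hQ : Q = P⁻¹)
    (K : Matrix (Fin 1) (Fin n) ℝ) (hK : K = U₀ * Yᵀ * (X₀ * Yᵀ)⁻¹)
    (f : Matrix (Fin n) (Fin 1) ℝ → Matrix (Fin n) (Fin 1) ℝ)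
    (hf : ∀ y : Matrix (Fin n) (Fin 1) ℝ, f y = A * y + B * (K * y) + D * y * (K * y))
    (E : Set (Matrix (Fin n) (Fin 1) ℝ))
    (hE : E = {y : Matrix (Fin n) (Fin 1) ℝ | (yᵀ * Q * y) 0 0 ≤ 1}) :
    ∀ z : ℕ → Matrix (Fin n) (Fin 1) ℝ, (∀ t : ℕ, z (t + 1) = f (z t)) →
      z 0 ∈ E →
        (∀ t : ℕ, z t ∈ E) ∧
        (∀ t : ℕ, ((z t)ᵀ * Q * z t) 0 0 ≤ μ ^ t * (((z 0)ᵀ * Q * z 0) 0 0)) ∧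
        Tendsto z atTop (𝓝 0) :=
  data_based_exponential_stability_general hn μ hμ A B D δ hD u x hdyn U₀ hU₀ X₀ hX₀ X₁ hX₁ V₀ hV₀
    ε₁ ε₂ Y P hPsym hblock hP Q hQ K hK f hf E hE
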